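/- arXiv:1008.3742 — 2 statements merged into one kernel-verified Lean document; each statement's English description precedes it below -/
import Mathlib

section
/- Let Σ₁ be a symmetric positive definite real n×n matrix and μ₁, μ₂ ∈ ℝⁿ with μ₁ ≠ μ₂. Then the supremum of (wᵀμ₁ − b)/√(wᵀΣ₁w) over all pairs (w, b) with w ∈ ℝⁿ nonzero and b ≥ wᵀμ₂ equals √((μ₁ − μ₂)ᵀΣ₁⁻¹(μ₁ − μ₂)), and it is attained at w⋆ = Σ₁⁻¹(μ₁ − μ₂) together with b⋆ = (w⋆)ᵀμ₂. -/
open Matrix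

/-!
Write `d = μ₁ − μ₂`. Since `b ≥ wᵀμ₂`, the objective is at most `wᵀd / √(wᵀΣ₁w)`, and the
Cauchy–Schwarz inequality for the inner product `⟪x, y⟫ = xᵀΣ₁y`, applied to `w` and
`Σ₁⁻¹d`, gives `(wᵀd)² ≤ (wᵀΣ₁w)(dᵀΣ₁⁻¹d)`, with equality when `w` is parallel to `Σ₁⁻¹d`.
-/

variable {m : Type*} [Fintype m]

theorem Matrix.PosSemidef.dotProduct_mulVec_sq_le {S : Matrix m m ℝ} (hS : S.PosSemidef)
    (x y : m → ℝ) : (x ⬝ᵥ (S *ᵥ y)) ^ 2 ≤ (x ⬝ᵥ (S *ᵥ x)) * (y ⬝ᵥ (S *ᵥ y)) := by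
  let := S.toSeminormedAddCommGroup hS
  let := S.toInnerProductSpace hS
  have hinner (u v : m → ℝ) : inner ℝ u v = u ⬝ᵥ (S *ᵥ v) := by
    change (S *ᵥ v) ⬝ᵥ star u = _
    rw [star_trivial, dotProduct_comm]
  simpa only [hinner, sq] using real_inner_mul_inner_self_le x y

variable [DecidableEq m]

theorem Matrix.mulVec_inv_mulVec {S : Matrix m m ℝ} (hS : IsUnit S.det) (d : m → ℝ) :
    S *ᵥ (S⁻¹ *ᵥ d) = d := by
  rw [mulVec_mulVec, mul_nonsing_inv S hS, one_mulVec]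

theorem Matrix.PosDef.dotProduct_sq_le {S : Matrix m m ℝ} (hS : S.PosDef) (w d : m → ℝ) :
    (w ⬝ᵥ d) ^ 2 ≤ (w ⬝ᵥ (S *ᵥ w)) * (d ⬝ᵥ (S⁻¹ *ᵥ d)) := by
  have hdet := hS.det_pos.ne'.isUnit
  have := hS.posSemidef.dotProduct_mulVec_sq_le w (S⁻¹ *ᵥ d)
  rwa [mulVec_inv_mulVec hdet, dotProduct_comm (S⁻¹ *ᵥ d)] at this

theorem Matrix.PosDef.dotProduct_div_sqrt_le {S : Matrix m m ℝ} (hS : S.PosDef) {w : m → ℝ}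
    (hw : w ≠ 0) (d : m → ℝ) :
    w ⬝ᵥ d / √(w ⬝ᵥ (S *ᵥ w)) ≤ √(d ⬝ᵥ (S⁻¹ *ᵥ d)) := by
  have hwSw : 0 < w ⬝ᵥ (S *ᵥ w) := hS.dotProduct_mulVec_pos hw
  rw [div_le_iff₀ (Real.sqrt_pos.mpr hwSw), mul_comm, ← Real.sqrt_mul hwSw.le]
  exact (le_abs_self _).trans (Real.abs_le_sqrt (hS.dotProduct_sq_le w d))

theorem Matrix.inv_mulVec_dotProduct_div_sqrt {S : Matrix m m ℝ} (hS : IsUnit S.det)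
    (d : m → ℝ) :
    (S⁻¹ *ᵥ d) ⬝ᵥ d / √((S⁻¹ *ᵥ d) ⬝ᵥ (S *ᵥ (S⁻¹ *ᵥ d))) = √(d ⬝ᵥ (S⁻¹ *ᵥ d)) := by
  rw [mulVec_inv_mulVec hS, dotProduct_comm, Real.div_sqrt]

/-- The supremum of `(wᵀμ₁ − b)/√(wᵀΣ₁w)` over nonzero `w` and `b ≥ wᵀμ₂` equals
`√((μ₁−μ₂)ᵀΣ₁⁻¹(μ₁−μ₂))`, attained at `w⋆ = Σ₁⁻¹(μ₁−μ₂)`, `b⋆ = (w⋆)ᵀμ₂`. -/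
theorem biased_mpm_closed_form {n : ℕ} (S₁ : Matrix (Fin n) (Fin n) ℝ)
    (hS₁ : S₁.PosDef) (μ₁ μ₂ : Fin n → ℝ) (hμ : μ₁ ≠ μ₂) :
    IsGreatest
      {v : ℝ | ∃ w : Fin n → ℝ, ∃ b : ℝ, w ≠ 0 ∧ w ⬝ᵥ μ₂ ≤ b ∧
          v = (w ⬝ᵥ μ₁ - b) / Real.sqrt (w ⬝ᵥ (S₁ *ᵥ w))}
      (Real.sqrt ((μ₁ - μ₂) ⬝ᵥ (S₁⁻¹ *ᵥ (μ₁ - μ₂)))) ∧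
    ((S₁⁻¹ *ᵥ (μ₁ - μ₂)) ⬝ᵥ μ₁ - (S₁⁻¹ *ᵥ (μ₁ - μ₂)) ⬝ᵥ μ₂) /
        Real.sqrt ((S₁⁻¹ *ᵥ (μ₁ - μ₂)) ⬝ᵥ (S₁ *ᵥ (S₁⁻¹ *ᵥ (μ₁ - μ₂)))) =
      Real.sqrt ((μ₁ - μ₂) ⬝ᵥ (S₁⁻¹ *ᵥ (μ₁ - μ₂))) := by
  have hdet := hS₁.det_pos.ne'.isUnit
  have hopt := inv_mulVec_dotProduct_div_sqrt hdet (μ₁ - μ₂)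
  rw [dotProduct_sub] at hopt
  refine ⟨⟨⟨S₁⁻¹ *ᵥ (μ₁ - μ₂), _, ?_, le_rfl, hopt.symm⟩, ?_⟩, hopt⟩
  · intro h
    apply sub_ne_zero.mpr hμ
    rw [← mulVec_inv_mulVec hdet (μ₁ - μ₂), h, mulVec_zero]
  · rintro _ ⟨w, b, hw, hb, rfl⟩
    calc (w ⬝ᵥ μ₁ - b) / √(w ⬝ᵥ (S₁ *ᵥ w))
        ≤ w ⬝ᵥ (μ₁ - μ₂) / √(w ⬝ᵥ (S₁ *ᵥ w)) := by
          rw [dotProduct_sub]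
          gcongr
      _ ≤ √((μ₁ - μ₂) ⬝ᵥ (S₁⁻¹ *ᵥ (μ₁ - μ₂))) := hS₁.dotProduct_div_sqrt_le hw _
end

section
/- For every γ ∈ (1/2, 1) one has Φ((2/3)·√(1/(2(1−γ)))) > γ, where Φ(t) = (gaussianReal 0 1)((−∞, t]) is the cumulative distribution function of the standard normal distribution. Equivalently, φ_SU(γ) = (2/3)√(1/(2(1−γ))) > Φ⁻¹(γ) for all γ ∈ (1/2, 1). -/
open MeasureTheory ProbabilityTheory Real Set Filter Topology
open scoped NNReal

/-!
With `t = (2/3)√(1/(2(1-γ)))` one has `γ = 1 - 2/(9t²)`, so the claim is the Gauss-type tail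
bound `P(Z > t) < 2/(9t²)` for a standard normal `Z` and every `t > 0`. For `t ≥ 3/2` it follows
from the Mills-ratio bound `P(Z > t) ≤ φ(t)/t` together with `exp (t²/2) ≥ 1 + t²/2 + t⁴/8`.
For `t ≤ 3/2` write `P(Z > t) = 1/2 - ∫₀ᵗ φ` and integrate `exp (-x²/2) ≥ (1 - x²/4)²`.
-/

lemma gaussianReal_real_eq_integral (μ : ℝ) {v : ℝ≥0} (hv : v ≠ 0) (s : Set ℝ) :
    (gaussianReal μ v).real s = ∫ x in s, gaussianPDFReal μ v x := by
  rw [measureReal_def, gaussianReal_apply_eq_integral μ hv, ENNReal.toReal_ofReal]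
  exact setIntegral_nonneg_of_ae (ae_of_all _ (gaussianPDFReal_nonneg μ v))

lemma gaussianReal_real_Iic_zero {v : ℝ≥0} (hv : v ≠ 0) :
    (gaussianReal 0 v).real (Iic 0) = 1 / 2 := by
  have : NullSingletonClass (gaussianReal 0 v) := nullSingletonClass_gaussianReal hv
  have hsymm : (gaussianReal 0 v).real (Iic 0) = (gaussianReal 0 v).real (Ioi 0) := by
    calc (gaussianReal 0 v).real (Iic 0)
        = ((gaussianReal 0 v).map (fun x ↦ -x)).real (Iic 0) := by
          rw [gaussianReal_map_neg, neg_zero]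
      _ = (gaussianReal 0 v).real (Ici 0) := by
          rw [map_measureReal_apply measurable_neg measurableSet_Iic, neg_preimage, neg_Iic,
            neg_zero]
      _ = (gaussianReal 0 v).real (Ioi 0) := measureReal_congr Ioi_ae_eq_Ici.symm
  have htotal := probReal_compl_eq_one_sub (μ := gaussianReal 0 v) (measurableSet_Iic (a := 0))
  rw [compl_Iic] at htotal
  linarith

lemma gaussianReal_real_Iic_eq_half_add {v : ℝ≥0} (hv : v ≠ 0) {t : ℝ} (ht : 0 ≤ t) :
    (gaussianReal 0 v).real (Iic t) = 1 / 2 + ∫ x in 0..t, gaussianPDFReal 0 v x := by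
  rw [← Iic_union_Ioc_eq_Iic ht, measureReal_union (Iic_disjoint_Ioc le_rfl) measurableSet_Ioc,
    gaussianReal_real_Iic_zero hv, gaussianReal_real_eq_integral 0 hv,
    intervalIntegral.integral_of_le ht]

lemma gaussianPDFReal_zero_one (x : ℝ) :
    gaussianPDFReal 0 1 x = (√(2 * π))⁻¹ * exp (-(x ^ 2 / 2)) := by
  simp only [gaussianPDFReal, NNReal.coe_one, mul_one, sub_zero]
  ring_nf

lemma half_add_le_gaussianReal_real_Iic {t : ℝ} (ht₀ : 0 ≤ t) (ht₂ : t ≤ 2) :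
    1 / 2 + (t - t ^ 3 / 6 + t ^ 5 / 80) / √(2 * π) ≤ (gaussianReal 0 1).real (Iic t) := by
  have hpoly : ∫ x in 0..t, (1 - x ^ 2 / 4) ^ 2 = t - t ^ 3 / 6 + t ^ 5 / 80 := by
    simp_rw [show ∀ x : ℝ, (1 - x ^ 2 / 4) ^ 2 = 1 - x ^ 2 / 2 + x ^ 4 / 16 by intro x; ring]
    rw [intervalIntegral.integral_add (by simp) (by simp),
      intervalIntegral.integral_sub (by simp) (by simp)]
    simp only [intervalIntegral.integral_const, intervalIntegral.integral_div, integral_pow]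
    ring
  rw [gaussianReal_real_Iic_eq_half_add one_ne_zero ht₀, ← hpoly,
    ← intervalIntegral.integral_div]
  gcongr
  refine intervalIntegral.integral_mono_on ht₀ (Continuous.intervalIntegrable (by fun_prop) _ _)
    (integrable_gaussianPDFReal 0 1).intervalIntegrable fun x hx ↦ ?_
  rw [gaussianPDFReal_zero_one, div_eq_inv_mul]
  gcongr
  calc (1 - x ^ 2 / 4) ^ 2 = (1 - x ^ 2 / 2 / (2 : ℕ)) ^ 2 := by norm_num; ring
    _ ≤ exp (-(x ^ 2 / 2)) :=
      one_sub_div_pow_le_exp_neg (by push_cast; nlinarith [hx.1, hx.2])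

lemma integral_Ioi_mul_exp_neg_sq_div_two {t : ℝ} (ht : 0 ≤ t) :
    IntegrableOn (fun x ↦ x * exp (-(x ^ 2 / 2))) (Ioi t) ∧
      ∫ x in Ioi t, x * exp (-(x ^ 2 / 2)) = exp (-(t ^ 2 / 2)) := by
  have hderiv (x : ℝ) : HasDerivAt (fun y ↦ -exp (-(y ^ 2 / 2))) (x * exp (-(x ^ 2 / 2))) x :=
    ((hasDerivAt_exp _).comp x ((hasDerivAt_pow 2 x).div_const 2).neg).neg.congr_deriv
      (by simp only [Pi.neg_apply]; ring)
  have hlim : Tendsto (fun y ↦ -exp (-(y ^ 2 / 2))) atTop (𝓝 (-0)) :=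
    (tendsto_exp_atBot.comp (tendsto_neg_atTop_atBot.comp
      ((tendsto_pow_atTop two_ne_zero).atTop_div_const two_pos))).neg
  have hnonneg : ∀ x ∈ Ioi t, 0 ≤ x * exp (-(x ^ 2 / 2)) := fun x hx ↦
    mul_nonneg (ht.trans hx.le) (exp_pos _).le
  have hcont : ContinuousWithinAt (fun y ↦ -exp (-(y ^ 2 / 2))) (Ici t) t :=
    (by fun_prop : Continuous fun y : ℝ ↦ -exp (-(y ^ 2 / 2))).continuousWithinAt
  refine ⟨integrableOn_Ioi_deriv_of_nonneg hcont (fun x _ ↦ hderiv x) hnonneg hlim, ?_⟩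
  rw [integral_Ioi_of_hasDerivAt_of_nonneg hcont (fun x _ ↦ hderiv x) hnonneg hlim]
  ring

lemma gaussianReal_real_Ioi_le {t : ℝ} (ht : 0 < t) :
    (gaussianReal 0 1).real (Ioi t) ≤ exp (-(t ^ 2 / 2)) / (√(2 * π) * t) := by
  obtain ⟨hint, hval⟩ := integral_Ioi_mul_exp_neg_sq_div_two ht.le
  calc (gaussianReal 0 1).real (Ioi t) = ∫ x in Ioi t, gaussianPDFReal 0 1 x :=
        gaussianReal_real_eq_integral 0 one_ne_zero _
    _ ≤ ∫ x in Ioi t, (√(2 * π) * t)⁻¹ * (x * exp (-(x ^ 2 / 2))) := by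
        refine setIntegral_mono_on (integrable_gaussianPDFReal 0 1).integrableOn
          (hint.const_mul _) measurableSet_Ioi fun x hx ↦ ?_
        rw [gaussianPDFReal_zero_one, mul_inv, mul_assoc, ← mul_assoc t⁻¹]
        gcongr
        exact le_mul_of_one_le_left (exp_pos _).le ((one_le_inv_mul₀ ht).2 (le_of_lt hx))
    _ = exp (-(t ^ 2 / 2)) / (√(2 * π) * t) := by
        rw [integral_const_mul, hval, inv_mul_eq_div]

lemma gaussianReal_real_Ioi_lt_of_le {t : ℝ} (ht₀ : 0 < t) (ht : t ≤ 3 / 2) :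
    (gaussianReal 0 1).real (Ioi t) < 2 / (9 * t ^ 2) := by
  have hsqrt : √(2 * π) < 251 / 100 := by
    rw [sqrt_lt' (by norm_num)]
    linarith [pi_lt_d2]
  have hP : 0 ≤ t - t ^ 3 / 6 + t ^ 5 / 80 := by
    nlinarith [mul_nonneg (mul_nonneg ht₀.le ht₀.le) (sub_nonneg.2 ht), pow_pos ht₀ 5]
  have hbound : 1 / 2 - (t - t ^ 3 / 6 + t ^ 5 / 80) / (251 / 100) < 2 / (9 * t ^ 2) := by
    rw [lt_div_iff₀ (by positivity)]
    nlinarith [mul_nonneg (pow_pos ht₀ 3).le (sub_nonneg.2 ht),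
      mul_nonneg (pow_pos ht₀ 4).le (sub_nonneg.2 ht), sq_nonneg (t - 1)]
  have hΦ := half_add_le_gaussianReal_real_Iic ht₀.le (by linarith)
  have hsqrt_le := div_le_div_of_nonneg_left hP (sqrt_pos.2 (by positivity)) hsqrt.le
  rw [← compl_Iic, probReal_compl_eq_one_sub measurableSet_Iic]
  linarith

lemma gaussianReal_real_Ioi_lt_of_ge {t : ℝ} (ht : 3 / 2 ≤ t) :
    (gaussianReal 0 1).real (Ioi t) < 2 / (9 * t ^ 2) := by
  have ht₀ : 0 < t := by linarith
  have hsqrt : 5 / 2 < √(2 * π) := by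
    rw [lt_sqrt (by norm_num)]
    linarith [pi_gt_d2]
  have hexp : 1 + t ^ 2 / 2 + (t ^ 2 / 2) ^ 2 / 2 ≤ exp (t ^ 2 / 2) :=
    quadratic_le_exp_of_nonneg (by positivity)
  have hpoly : 9 * t < 5 * (1 + t ^ 2 / 2 + (t ^ 2 / 2) ^ 2 / 2) := by
    nlinarith [sq_nonneg (t - 3 / 2), sq_nonneg (t ^ 2 - 9 / 4)]
  have hprod : 5 / 2 * (1 + t ^ 2 / 2 + (t ^ 2 / 2) ^ 2 / 2) < √(2 * π) * exp (t ^ 2 / 2) :=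
    mul_lt_mul hsqrt hexp (by positivity) (sqrt_nonneg _)
  calc (gaussianReal 0 1).real (Ioi t) ≤ exp (-(t ^ 2 / 2)) / (√(2 * π) * t) :=
        gaussianReal_real_Ioi_le ht₀
    _ < 2 / (9 * t ^ 2) := by
        rw [exp_neg, ← one_div, div_div, div_lt_div_iff₀ (by positivity) (by positivity)]
        nlinarith [mul_lt_mul_of_pos_left hprod ht₀]

theorem gaussianReal_real_Ioi_lt {t : ℝ} (ht : 0 < t) :
    (gaussianReal 0 1).real (Ioi t) < 2 / (9 * t ^ 2) := by
  rcases le_total t (3 / 2) with h | h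
  exacts [gaussianReal_real_Ioi_lt_of_le ht h, gaussianReal_real_Ioi_lt_of_ge h]

/-- For `γ ∈ (1/2, 1)`, `Φ((2/3)√(1/(2(1−γ)))) > γ`, i.e. `φ_SU(γ) > Φ⁻¹(γ)`,
where `Φ` is the standard normal c.d.f. -/
theorem phi_SU_gt_probit :
    ∀ γ : ℝ, γ ∈ Set.Ioo (1 / 2 : ℝ) 1 →
      γ < (gaussianReal 0 1
            (Set.Iic (2 / 3 * Real.sqrt (1 / (2 * (1 - γ)))))).toReal := by
  rintro γ ⟨-, hγ⟩
  have hpos : 0 < 1 / (2 * (1 - γ)) := by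
    apply div_pos one_pos
    linarith
  set t := 2 / 3 * √(1 / (2 * (1 - γ)))
  have ht : 0 < t := by positivity
  have hγt : 2 / (9 * t ^ 2) = 1 - γ := by
    rw [mul_pow, sq_sqrt hpos.le]
    field_simp
    ring
  have htail := gaussianReal_real_Ioi_lt ht
  rw [hγt, ← compl_Iic, probReal_compl_eq_one_sub measurableSet_Iic] at htail
  rw [← measureReal_def]
  linarith
end
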